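/- For every cost-trace w, position n, and valuation α: (w,n,α) ⊨ φ R_{≤y} ψ — i.e. for every j ≥ 0 with Σ_{k=n}^{n+j-1} cₖ ≤ α(y), either (w,n+j,α) ⊨ ψ or there exists 0 ≤ k < j with (w,n+k,α) ⊨ φ — if and only if (w,n,α) ⊨ (φ R ψ) ∨ G_{≤y}ψ. -/

import Mathlib

inductive cPLTL (P V : Type) : Type
  | pos (p : P)
  | neg (p : P)
  | and (φ ψ : cPLTL P V)
  | or (φ ψ : cPLTL P V)
  | next (φ : cPLTL P V)
  | until_ (φ ψ : cPLTL P V)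
  | release (φ ψ : cPLTL P V)
  | fle (z : V) (φ : cPLTL P V)
  | gle (z : V) (φ : cPLTL P V)

def cost (c : ℕ → ℕ) (n j : ℕ) : ℕ := ∑ k ∈ Finset.range j, c (n + k)

def Sat {P V : Type} (w : ℕ → Set P) (c : ℕ → ℕ) (α : V → ℕ) : cPLTL P V → ℕ → Prop
  | .pos p, n => p ∈ w n
  | .neg p, n => p ∉ w n
  | .and φ ψ, n => Sat w c α φ n ∧ Sat w c α ψ n
  | .or φ ψ, n => Sat w c α φ n ∨ Sat w c α ψ n
  | .next φ, n => Sat w c α φ (n + 1)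
  | .until_ φ ψ, n => ∃ j, Sat w c α ψ (n + j) ∧ ∀ k < j, Sat w c α φ (n + k)
  | .release φ ψ, n => ∀ j, Sat w c α ψ (n + j) ∨ ∃ k < j, Sat w c α φ (n + k)
  | .fle z φ, n => ∃ j, cost c n j ≤ α z ∧ Sat w c α φ (n + j)
  | .gle z φ, n => ∀ j, cost c n j ≤ α z → Sat w c α φ (n + j)

lemma cost_monotone (c : ℕ → ℕ) (n : ℕ) : Monotone (cost c n) :=
  fun _ _ h => Finset.sum_le_sum_of_subset (Finset.range_subset_range.mpr h)

/- If `Q` fails at some `j₀` with `B j₀`, the witness `k < j₀` of `R` serves every `j > k`, while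
every `j ≤ k` lies below `j₀` and so still satisfies `B`. -/
lemma forall_imp_or_exists_lt_iff {B Q R : ℕ → Prop} (hB : Antitone B) :
    (∀ j, B j → Q j ∨ ∃ k < j, R k) ↔ (∀ j, Q j ∨ ∃ k < j, R k) ∨ ∀ j, B j → Q j := by
  refine ⟨fun h => ?_, ?_⟩
  · by_cases hglob : ∀ j, B j → Q j
    · exact Or.inr hglob
    push Not at hglob
    obtain ⟨j₀, hBj₀, hQj₀⟩ := hglob
    obtain ⟨k, hkj₀, hRk⟩ := (h j₀ hBj₀).resolve_left hQj₀
    refine Or.inl fun j => ?_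
    rcases lt_or_ge k j with hkj | hjk
    · exact Or.inr ⟨k, hkj, hRk⟩
    · exact h j (hB (hjk.trans hkj₀.le) hBj₀)
  · rintro (hrel | hglob) j hBj
    exacts [hrel j, Or.inl (hglob j hBj)]

theorem release_le_correct {P V : Type} (w : ℕ → Set P) (c : ℕ → ℕ)
    (n : ℕ) (α : V → ℕ) (y : V) (φ ψ : cPLTL P V) :
    (∀ j, cost c n j ≤ α y → (Sat w c α ψ (n + j) ∨ ∃ k < j, Sat w c α φ (n + k))) ↔
      Sat w c α (.or (.release φ ψ) (.gle y ψ)) n :=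
  forall_imp_or_exists_lt_iff fun _ _ hij hbudget => (cost_monotone c n hij).trans hbudget
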